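/- arXiv:1605.04379 — 4 statements merged into one kernel-verified Lean document; each statement's English description precedes it below -/
import Mathlib

section
/- Let V be a finite nonempty set of n vertices and let S : V → V → ℝ be a symmetric, nonnegative separation function with S v v = 0 for all v. Suppose S satisfies the triangle inequality: S x z ≤ S x y + S y z for all x, y, z ∈ V. Then the minimum Hamiltonian path cost equals the minimum range over all valid assignments; precisely: (i) there exists a valid assignment C : V → ℝ whose range equals H(S), and (ii) every valid assignment C satisfies R(C) ≥ H(S). -/
/-
Place the vertices of an optimal Hamiltonian path `h` on the line, `h k` at the length of the path
from `h 0` to `h k`. By the triangle inequality this assignment is valid, and its range is the cost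
of the path. Conversely, listing the vertices in increasing order of a valid assignment `C` gives a
path each of whose steps costs at most the corresponding increment of `C`, so its cost is at most the
telescoped range of `C`.
-/

open Finset

variable {V : Type*}

/-- Cost of the Hamiltonian path ordering `h : Fin n ≃ V`:
`Σ_{k=0}^{n-2} S (h k) (h (k+1))`. -/
noncomputable def hamCost (n : ℕ) (S : V → V → ℝ) (h : Fin n ≃ V) : ℝ :=
  ∑ k : Fin (n - 1),
    S (h ⟨(k : ℕ), by have := k.isLt; omega⟩) (h ⟨(k : ℕ) + 1, by have := k.isLt; omega⟩)

/-- `H(S)`: the minimum Hamiltonian path cost over all bijections `Fin n ≃ V`. -/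
noncomputable def hamMin (V : Type*) (n : ℕ) (S : V → V → ℝ) : ℝ :=
  sInf (Set.range fun h : Fin n ≃ V => hamCost n S h)

/-- An assignment is valid if `|C x − C y| ≥ S x y` for all distinct `x, y`. -/
def IsValidAssignment (S : V → V → ℝ) (C : V → ℝ) : Prop :=
  ∀ x y : V, x ≠ y → S x y ≤ |C x - C y|

/-- Range of an assignment: max value minus min value. -/
noncomputable def rangeOf [Fintype V] [Nonempty V] (C : V → ℝ) : ℝ :=
  univ.sup' univ_nonempty C - univ.inf' univ_nonempty C

namespace Fin

theorem partialSum_last {M : Type*} [AddCommMonoid M] {m : ℕ} (f : Fin m → M) :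
    partialSum f (last m) = ∑ i, f i := by
  simp only [partialSum, val_last]
  rw [List.take_of_length_le (by simp), List.sum_ofFn]

theorem monotone_partialSum {M : Type*} [AddCommMonoid M] [PartialOrder M]
    [IsOrderedAddMonoid M] {m : ℕ} {f : Fin m → M} (hf : 0 ≤ f) : Monotone (partialSum f) :=
  monotone_iff_le_succ.mpr fun i => by
    simpa only [partialSum_succ] using le_add_of_nonneg_right (hf i)

theorem partialSum_le_sub_of_le_sub {M : Type*} [AddCommGroup M] [PartialOrder M]
    [IsOrderedAddMonoid M] {m : ℕ} {f : Fin m → M} {g : Fin (m + 1) → M}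
    (hfg : ∀ k, f k ≤ g k.succ - g k.castSucc) (j : Fin (m + 1)) :
    partialSum f j ≤ g j - g 0 := by
  induction j using Fin.induction with
  | zero => simp
  | succ k ih =>
    calc partialSum f k.succ = partialSum f k.castSucc + f k := partialSum_succ f k
      _ ≤ (g k.castSucc - g 0) + (g k.succ - g k.castSucc) := add_le_add ih (hfg k)
      _ = g k.succ - g 0 := by abel

end Fin

open Fin

section Path

variable {S : V → V → ℝ} {m : ℕ}

-- `S x x ≥ 0` from `S x y ≤ S x x + S x y`, and `S x x ≤ S x y + S y x = 2 S x y`.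
theorem nonneg_of_symm_of_triangle (hsymm : ∀ x y : V, S x y = S y x)
    (htri : ∀ x y z : V, S x z ≤ S x y + S y z) (x y : V) : 0 ≤ S x y := by
  linarith [htri x y x, htri x x y, hsymm x y]

variable (S) in
def pathSteps (p : Fin (m + 1) → V) (k : Fin m) : ℝ :=
  S (p k.castSucc) (p k.succ)

theorem hamCost_eq_sum_pathSteps (h : Fin (m + 1) ≃ V) :
    hamCost (m + 1) S h = ∑ k, pathSteps S h k :=
  rfl

theorem le_partialSum_pathSteps_sub (htri : ∀ x y z : V, S x z ≤ S x y + S y z)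
    (p : Fin (m + 1) → V) {i j : Fin (m + 1)} (hij : i < j) :
    S (p i) (p j) ≤ partialSum (pathSteps S p) j - partialSum (pathSteps S p) i := by
  induction j using Fin.induction with
  | zero => exact absurd hij (not_lt_zero i)
  | succ k ih =>
    rw [partialSum_succ]
    rcases (le_castSucc_iff.mpr hij).lt_or_eq with hik | rfl
    · have hstep : pathSteps S p k = S (p k.castSucc) (p k.succ) := rfl
      linarith [htri (p i) (p k.castSucc) (p k.succ), ih hik]
    · simp [pathSteps]

variable (S) in
noncomputable def pathAssignment (h : Fin (m + 1) ≃ V) (v : V) : ℝ :=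
  partialSum (pathSteps S h) (h.symm v)

theorem isValidAssignment_pathAssignment (hsymm : ∀ x y : V, S x y = S y x)
    (htri : ∀ x y z : V, S x z ≤ S x y + S y z) (h : Fin (m + 1) ≃ V) :
    IsValidAssignment S (pathAssignment S h) := by
  have hle : ∀ x y : V, h.symm x < h.symm y →
      S x y ≤ |pathAssignment S h x - pathAssignment S h y| := fun x y hxy => by
    have := le_partialSum_pathSteps_sub htri h hxy
    simp only [Equiv.apply_symm_apply] at this
    exact this.trans ((le_abs_self _).trans (abs_sub_comm _ _).le)
  intro x y hxy
  rcases lt_or_gt_of_ne (h.symm.injective.ne hxy) with hlt | hgt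
  · exact hle x y hlt
  · rw [hsymm, abs_sub_comm]
    exact hle y x hgt

end Path

section Range

variable [Fintype V] [Nonempty V] {S : V → V → ℝ} {m : ℕ}

theorem rangeOf_eq_of_monotone_comp {C : V → ℝ}
    (h : Fin (m + 1) ≃ V) (hC : Monotone (C ∘ h)) :
    rangeOf C = C (h (last m)) - C (h 0) := by
  have hbound : ∀ v, C (h 0) ≤ C v ∧ C v ≤ C (h (last m)) := fun v => by
    simpa using And.intro (hC (zero_le (h.symm v))) (hC (le_last (h.symm v)))
  rw [rangeOf]
  congr 1
  · exact le_antisymm (sup'_le _ _ fun v _ => (hbound v).2) (le_sup' C (mem_univ _))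
  · exact le_antisymm (inf'_le C (mem_univ _)) (le_inf' _ _ fun v _ => (hbound v).1)

theorem rangeOf_pathAssignment (hsymm : ∀ x y : V, S x y = S y x)
    (htri : ∀ x y z : V, S x z ≤ S x y + S y z) (h : Fin (m + 1) ≃ V) :
    rangeOf (pathAssignment S h) = hamCost (m + 1) S h := by
  have hmono : Monotone (pathAssignment S h ∘ h) := by
    simpa [Function.comp_def, pathAssignment] using
      monotone_partialSum fun k => nonneg_of_symm_of_triangle hsymm htri _ _
  rw [rangeOf_eq_of_monotone_comp h hmono, hamCost_eq_sum_pathSteps]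
  simp [pathAssignment, partialSum_last]

theorem hamCost_le_rangeOf {C : V → ℝ} (hC : IsValidAssignment S C) (h : Fin (m + 1) ≃ V)
    (hmono : Monotone (C ∘ h)) : hamCost (m + 1) S h ≤ rangeOf C := by
  have hstep : ∀ k, pathSteps S h k ≤ C (h k.succ) - C (h k.castSucc) := fun k => by
    have hle := hC _ _ (h.injective.ne (castSucc_lt_succ (i := k)).ne)
    have hCk : C (h k.castSucc) ≤ C (h k.succ) := hmono (castSucc_le_succ k)
    rwa [abs_sub_comm, abs_of_nonneg (sub_nonneg.mpr hCk)] at hle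
  rw [hamCost_eq_sum_pathSteps, ← partialSum_last, rangeOf_eq_of_monotone_comp h hmono]
  exact partialSum_le_sub_of_le_sub (g := C ∘ h) hstep (last m)

end Range

theorem hamMin_le_hamCost [Finite V] {n : ℕ} (S : V → V → ℝ) (h : Fin n ≃ V) :
    hamMin V n S ≤ hamCost n S h :=
  csInf_le (Set.finite_range _).bddBelow ⟨h, rfl⟩

theorem exists_hamCost_eq_hamMin [Finite V] {n : ℕ} (S : V → V → ℝ) [Nonempty (Fin n ≃ V)] :
    ∃ h : Fin n ≃ V, hamCost n S h = hamMin V n S :=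
  (Set.range_nonempty _).csInf_mem (Set.finite_range _)

theorem hamiltonian_path_cost_eq_min_range_general
    [Fintype V] [Nonempty V] (n : ℕ) (hcard : Fintype.card V = n)
    (S : V → V → ℝ)
    (hsymm : ∀ x y : V, S x y = S y x)
    (htri : ∀ x y z : V, S x z ≤ S x y + S y z) :
    (∃ C : V → ℝ, IsValidAssignment S C ∧ rangeOf C = hamMin V n S) ∧
    (∀ C : V → ℝ, IsValidAssignment S C → hamMin V n S ≤ rangeOf C) := by
  obtain ⟨m, rfl⟩ := Nat.exists_eq_add_one.mpr (hcard ▸ Fintype.card_pos)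
  let e : Fin (m + 1) ≃ V := (Fintype.equivFinOfCardEq hcard).symm
  have : Nonempty (Fin (m + 1) ≃ V) := ⟨e⟩
  obtain ⟨h, hh⟩ := exists_hamCost_eq_hamMin (n := m + 1) S
  refine ⟨⟨pathAssignment S h, isValidAssignment_pathAssignment hsymm htri h, ?_⟩, fun C hC => ?_⟩
  · rw [rangeOf_pathAssignment hsymm htri, hh]
  · let sorted : Fin (m + 1) ≃ V := (Tuple.sort (C ∘ e)).trans e
    exact (hamMin_le_hamCost S sorted).trans
      (hamCost_le_rangeOf hC sorted (Tuple.monotone_sort (C ∘ e)))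

theorem hamiltonian_path_cost_eq_min_range
    [Fintype V] [Nonempty V] (n : ℕ) (hn : 0 < n) (hcard : Fintype.card V = n)
    (S : V → V → ℝ)
    (hsymm : ∀ x y : V, S x y = S y x)
    (hnonneg : ∀ x y : V, 0 ≤ S x y)
    (hdiag : ∀ v : V, S v v = 0)
    (htri : ∀ x y z : V, S x z ≤ S x y + S y z) :
    (∃ C : V → ℝ, IsValidAssignment S C ∧ rangeOf C = hamMin V n S) ∧
    (∀ C : V → ℝ, IsValidAssignment S C → hamMin V n S ≤ rangeOf C) :=
  hamiltonian_path_cost_eq_min_range_general n hcard S hsymm htri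
end

section
/- Let V be a finite nonempty set of n vertices and let S : V → V → ℝ be a symmetric, nonnegative separation function with S v v = 0 (no triangle-inequality assumption is needed). Then every valid assignment C : V → ℝ satisfies R(C) ≥ H(S); that is, the minimum Hamiltonian path cost is a lower bound on the range of any valid frequency assignment. -/
open Finset

variable {V : Type*}

theorem hamiltonian_path_cost_le_range
    [Fintype V] [Nonempty V] (n : ℕ) (hn : 0 < n) (hcard : Fintype.card V = n)
    (S : V → V → ℝ)
    (hsymm : ∀ x y : V, S x y = S y x)
    (hnonneg : ∀ x y : V, 0 ≤ S x y)
    (hdiag : ∀ v : V, S v v = 0) :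
    ∀ C : V → ℝ, IsValidAssignment S C → hamMin V n S ≤ rangeOf C := by
  intro C hC
  classical
  obtain ⟨e⟩ : Nonempty (Fin n ≃ V) := ⟨(Fintype.equivFinOfCardEq hcard).symm⟩
  set σ := Tuple.sort (C ∘ e) with hσ
  set h : Fin n ≃ V := σ.trans e with hh
  have hmono : Monotone (C ∘ h) := Tuple.monotone_sort (C ∘ e)
  have hlt : n - 1 < n := by omega
  -- extended function
  set f : ℕ → ℝ := fun i => C (h ⟨min i (n-1), lt_of_le_of_lt (min_le_right _ _) hlt⟩) with hf
  have key : hamCost n S h ≤ f (n-1) - f 0 := by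
    rw [show f (n-1) - f 0 = ∑ i ∈ Finset.range (n-1), (f (i+1) - f i) from
      (Finset.sum_range_sub f (n-1)).symm]
    unfold hamCost
    rw [← Fin.sum_univ_eq_sum_range (fun i => f (i+1) - f i) (n-1)]
    apply Finset.sum_le_sum
    intro k _
    obtain ⟨i, hi⟩ := k
    have h1 : i < n := by omega
    have h2 : i + 1 < n := by omega
    have hmin1 : min i (n-1) = i := by omega
    have hmin2 : min (i+1) (n-1) = i + 1 := by omega
    have hne : h ⟨i, h1⟩ ≠ h ⟨i+1, h2⟩ := by
      intro hEq
      have := h.injective hEq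
      simp [Fin.ext_iff] at this
    have hle : C (h ⟨i, h1⟩) ≤ C (h ⟨i+1, h2⟩) := by
      have : (⟨i, h1⟩ : Fin n) ≤ ⟨i+1, h2⟩ := by simp [Fin.le_def]
      exact hmono this
    have := hC _ _ hne
    rw [abs_sub_comm, abs_of_nonneg (by linarith)] at this
    simp only [hf, hmin1, hmin2]
    linarith
  have hub : f (n-1) - f 0 ≤ rangeOf C := by
    unfold rangeOf
    have h1 : f (n-1) ≤ univ.sup' univ_nonempty C := Finset.le_sup' C (Finset.mem_univ _)
    have h2 : univ.inf' univ_nonempty C ≤ f 0 := Finset.inf'_le C (Finset.mem_univ _)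
    linarith
  have hfin : (Set.range fun h : Fin n ≃ V => hamCost n S h).Finite := Set.finite_range _
  calc hamMin V n S ≤ hamCost n S h :=
        csInf_le hfin.bddBelow ⟨h, rfl⟩
    _ ≤ f (n-1) - f 0 := key
    _ ≤ rangeOf C := hub
end

section
/- Let V be a finite nonempty set of n vertices, S : V → V → ℝ a symmetric nonnegative separation function with S v v = 0, and C : V → ℝ a valid assignment. Let a : Fin n ≃ V be a bijection that sorts the values of C in ascending order, i.e., C(a i) ≤ C(a j) whenever i ≤ j. Then R(C) = Σ_{k=1}^{n−1} (C(a k) − C(a (k−1))) ≥ Σ_{k=1}^{n−1} S (a (k−1)) (a k); in particular the range of C is at least the cost of the Hamiltonian path ordering a. -/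
open Finset

variable {V : Type*}

theorem range_eq_telescoping_sum_ge_sorted_path_cost
    [Fintype V] [Nonempty V] (n : ℕ) (hn : 0 < n) (hcard : Fintype.card V = n)
    (S : V → V → ℝ)
    (hsymm : ∀ x y : V, S x y = S y x)
    (hnonneg : ∀ x y : V, 0 ≤ S x y)
    (hdiag : ∀ v : V, S v v = 0)
    (C : V → ℝ) (hvalid : IsValidAssignment S C)
    (a : Fin n ≃ V)
    (hsorted : ∀ i j : Fin n, i ≤ j → C (a i) ≤ C (a j)) :
    rangeOf C =
      (∑ k : Fin (n - 1),
        (C (a ⟨(k : ℕ) + 1, by have := k.isLt; omega⟩) -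
          C (a ⟨(k : ℕ), by have := k.isLt; omega⟩))) ∧
    hamCost n S a ≤
      ∑ k : Fin (n - 1),
        (C (a ⟨(k : ℕ) + 1, by have := k.isLt; omega⟩) -
          C (a ⟨(k : ℕ), by have := k.isLt; omega⟩)) := by

  have htop : n - 1 < n := by omega
  set top : Fin n := ⟨n - 1, htop⟩ with htopdef
  set bot : Fin n := ⟨0, hn⟩ with hbotdef
  -- telescoping
  have key : (∑ k : Fin (n - 1),
        (C (a ⟨(k : ℕ) + 1, by have := k.isLt; omega⟩) -
          C (a ⟨(k : ℕ), by have := k.isLt; omega⟩))) = C (a top) - C (a bot) := by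
    set g : ℕ → ℝ := fun k => C (a ⟨min k (n - 1), by omega⟩) with hg
    have : (∑ k : Fin (n - 1),
        (C (a ⟨(k : ℕ) + 1, by have := k.isLt; omega⟩) -
          C (a ⟨(k : ℕ), by have := k.isLt; omega⟩))) = ∑ k ∈ Finset.range (n-1), (g (k+1) - g k) := by
      rw [← Fin.sum_univ_eq_sum_range (fun k => g (k+1) - g k)]
      refine Finset.sum_congr rfl fun k _ => ?_
      have hk' : (k : ℕ) < n - 1 := k.isLt
      simp only [hg]
      congr 3 <;> simp <;> omega
    rw [this, Finset.sum_range_sub g]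
    simp only [hg]
    congr 2 <;> simp [htopdef, hbotdef]
  constructor
  · rw [key]
    have hsup : univ.sup' univ_nonempty C = C (a top) := by
      apply le_antisymm
      · apply Finset.sup'_le
        intro v _
        have := hsorted (a.symm v) top (by simp [Fin.le_def, htopdef]; omega)
        simpa using this
      · exact Finset.le_sup' C (mem_univ _)
    have hinf : univ.inf' univ_nonempty C = C (a bot) := by
      apply le_antisymm
      · exact Finset.inf'_le C (mem_univ _)
      · apply Finset.le_inf'
        intro v _
        have := hsorted bot (a.symm v) (by simp [Fin.le_def, hbotdef])
        simpa using this
    rw [rangeOf, hsup, hinf]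
  · unfold hamCost
    apply Finset.sum_le_sum
    intro k _
    have hk := k.isLt
    set i : Fin n := ⟨(k : ℕ), by omega⟩
    set j : Fin n := ⟨(k : ℕ) + 1, by omega⟩
    have hij : i ≠ j := by simp [i, j, Fin.ext_iff]
    have hne : a i ≠ a j := fun h => hij (a.injective h)
    have hle : C (a i) ≤ C (a j) := hsorted i j (by simp [i, j, Fin.le_def])
    have := hvalid (a i) (a j) hne
    rwa [abs_sub_comm, abs_of_nonneg (by linarith)] at this
end

section
/- Let V be a finite nonempty set of n vertices and let S : V → V → ℝ be a symmetric, nonnegative separation function with S v v = 0 satisfying the triangle inequality: S x z ≤ S x y + S y z for all x, y, z ∈ V. Let h : Fin n ≃ V be any Hamiltonian path ordering and define C : V → ℝ by C(h 0) = 0 and C(h i) = Σ_{k=0}^{i−1} S (h k) (h (k+1)) for i ≥ 1. Then C is a valid assignment: |C x − C y| ≥ S x y for all distinct x, y ∈ V. -/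
/-! For `i < j`, `C (h j) - C (h i)` is the length of the subpath from `h i` to `h j`, which
dominates `S (h i) (h j)` by the triangle inequality; symmetry of `S` handles `j < i`. -/

open Finset

variable {V : Type*}

/-- The canonical assignment along a Hamiltonian path ordering `h`:
`C (h i) = Σ_{k=0}^{i-1} S (h k) (h (k+1))` (so `C (h 0) = 0`). -/
noncomputable def prefixAssignment (n : ℕ) (S : V → V → ℝ) (h : Fin n ≃ V) : V → ℝ :=
  fun v =>
    ∑ k : Fin n,
      if hk : (k : ℕ) + 1 ≤ ((h.symm v : Fin n) : ℕ) then
        S (h k) (h ⟨(k : ℕ) + 1, by have := (h.symm v).isLt; omega⟩)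
      else 0

theorem le_sum_Ico_of_triangle {S : V → V → ℝ} (htri : ∀ x y z : V, S x z ≤ S x y + S y z)
    (f : ℕ → V) {a b : ℕ} (hab : a < b) :
    S (f a) (f b) ≤ ∑ k ∈ Ico a b, S (f k) (f (k + 1)) := by
  induction b, hab using Nat.le_induction with
  | base => simp
  | succ b hab ih =>
    calc S (f a) (f (b + 1)) ≤ S (f a) (f b) + S (f b) (f (b + 1)) := htri _ _ _
      _ ≤ ∑ k ∈ Ico a b, S (f k) (f (k + 1)) + S (f b) (f (b + 1)) := by gcongr
      _ = ∑ k ∈ Ico a (b + 1), S (f k) (f (k + 1)) := (sum_Ico_succ_top (by omega) _).symm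

theorem prefixAssignment_eq_sum_range {n : ℕ} (S : V → V → ℝ) (h : Fin n ≃ V)
    (f : ℕ → V) (hf : ∀ k : Fin n, f k = h k) (v : V) :
    prefixAssignment n S h v = ∑ k ∈ range (h.symm v), S (f k) (f (k + 1)) := by
  set m : ℕ := (h.symm v : ℕ)
  have hm : m < n := (h.symm v).isLt
  calc prefixAssignment n S h v
      = ∑ k : Fin n, if (k : ℕ) + 1 ≤ m then S (f k) (f (k + 1)) else 0 := by
        refine sum_congr rfl fun k _ => ?_
        split_ifs with hk
        · rw [hf k, ← hf ⟨k + 1, by omega⟩]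
        · rfl
    _ = ∑ k ∈ (range n).filter (· + 1 ≤ m), S (f k) (f (k + 1)) := by
        rw [sum_filter, Fin.sum_univ_eq_sum_range (fun k => if k + 1 ≤ m then S (f k) (f (k + 1)) else 0)]
    _ = ∑ k ∈ range m, S (f k) (f (k + 1)) := by
        congr 1
        ext k
        simp only [mem_filter, mem_range]
        omega

theorem le_prefixAssignment_sub {n : ℕ} {S : V → V → ℝ}
    (htri : ∀ x y z : V, S x z ≤ S x y + S y z) (h : Fin n ≃ V) {x y : V}
    (hxy : h.symm x < h.symm y) :
    S x y ≤ prefixAssignment n S h y - prefixAssignment n S h x := by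
  let f : ℕ → V := fun k => if hk : k < n then h ⟨k, hk⟩ else x
  have hf : ∀ k : Fin n, f k = h k := fun k => dif_pos k.isLt
  rw [prefixAssignment_eq_sum_range S h f hf, prefixAssignment_eq_sum_range S h f hf,
    ← sum_Ico_eq_sub _ hxy.le]
  calc S x y = S (f (h.symm x)) (f (h.symm y)) := by simp only [hf, Equiv.apply_symm_apply]
    _ ≤ _ := le_sum_Ico_of_triangle htri f hxy

theorem prefixAssignment_isValid_general
    (n : ℕ)
    (S : V → V → ℝ)
    (hsymm : ∀ x y : V, S x y = S y x)
    (htri : ∀ x y z : V, S x z ≤ S x y + S y z)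
    (h : Fin n ≃ V) :
    IsValidAssignment S (prefixAssignment n S h) := by
  intro x y hxy
  rcases lt_or_gt_of_ne (h.symm.injective.ne hxy) with hlt | hgt
  · rw [abs_sub_comm]
    exact (le_prefixAssignment_sub htri h hlt).trans (le_abs_self _)
  · rw [hsymm]
    exact (le_prefixAssignment_sub htri h hgt).trans (le_abs_self _)

theorem prefixAssignment_isValid
    [Fintype V] [Nonempty V] (n : ℕ) (hn : 0 < n) (hcard : Fintype.card V = n)
    (S : V → V → ℝ)
    (hsymm : ∀ x y : V, S x y = S y x)
    (hnonneg : ∀ x y : V, 0 ≤ S x y)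
    (hdiag : ∀ v : V, S v v = 0)
    (htri : ∀ x y z : V, S x z ≤ S x y + S y z)
    (h : Fin n ≃ V) :
    IsValidAssignment S (prefixAssignment n S h) :=
  prefixAssignment_isValid_general n S hsymm htri h
end
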